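/- InqBQ is not entailment-compact relative to id-models: there exist a set of formulas Φ and a formula ψ such that Φ ⊨_id ψ, but for every finite Φ₀ ⊆ Φ, Φ₀ ⊭_id ψ. -/

import Mathlib

namespace InqBQ

/-- A signature: predicate symbols and function symbols, each with an arity. -/
structure Sig where
  Pred : Type
  parity : Pred → ℕ
  Func : Type
  farity : Func → ℕ

/-- Terms over a signature, with variables indexed by `ℕ`. -/
inductive Term (σ : Sig) : Type where
  | var : ℕ → Term σ
  | func : (f : σ.Func) → (Fin (σ.farity f) → Term σ) → Term σ

/-- Formulas of InqBQ. -/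
inductive Formula (σ : Sig) : Type where
  | pred : (P : σ.Pred) → (Fin (σ.parity P) → Term σ) → Formula σ
  | eq : Term σ → Term σ → Formula σ
  | falsum : Formula σ
  | conj : Formula σ → Formula σ → Formula σ
  | idisj : Formula σ → Formula σ → Formula σ
  | impl : Formula σ → Formula σ → Formula σ
  | all : ℕ → Formula σ → Formula σ
  | iex : ℕ → Formula σ → Formula σ

variable {σ : Sig}

/-- ¬φ := φ → ⊥ -/
def Formula.neg (φ : Formula σ) : Formula σ := .impl φ .falsum

/-- ?φ := φ ⩒ ¬φ -/
def Formula.qm (φ : Formula σ) : Formula σ := .idisj φ φ.neg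

/-- ⊤ := ¬⊥ -/
def Formula.verum : Formula σ := Formula.neg .falsum

/-- Classical formulas: no inquisitive disjunction, no inquisitive existential. -/
def Formula.IsClassical : Formula σ → Prop
  | .pred _ _ => True
  | .eq _ _ => True
  | .falsum => True
  | .conj φ ψ => φ.IsClassical ∧ ψ.IsClassical
  | .idisj _ _ => False
  | .impl φ ψ => φ.IsClassical ∧ ψ.IsClassical
  | .all _ φ => φ.IsClassical
  | .iex _ _ => False

/-- The variable `n` occurs in a term. -/
def Term.VarOccurs : Term σ → ℕ → Prop
  | .var m, n => m = n
  | .func _ ts, n => ∃ i, (ts i).VarOccurs n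

/-- The variable `n` occurs free in a formula. -/
def Formula.FreeVar : Formula σ → ℕ → Prop
  | .pred _ ts, n => ∃ i, (ts i).VarOccurs n
  | .eq t t', n => t.VarOccurs n ∨ t'.VarOccurs n
  | .falsum, _ => False
  | .conj φ ψ, n => φ.FreeVar n ∨ ψ.FreeVar n
  | .idisj φ ψ, n => φ.FreeVar n ∨ ψ.FreeVar n
  | .impl φ ψ, n => φ.FreeVar n ∨ ψ.FreeVar n
  | .all x φ, n => n ≠ x ∧ φ.FreeVar n
  | .iex x φ, n => n ≠ x ∧ φ.FreeVar n

/-- A sentence is a formula with no free variables. -/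
def Formula.IsSentence (φ : Formula σ) : Prop := ∀ n, ¬ φ.FreeVar n

/-- A first-order information model `M = (W, D, I, ∼)`. -/
structure Model (σ : Sig) where
  W : Type
  D : Type
  wNonempty : Nonempty W
  dNonempty : Nonempty D
  predI : W → (P : σ.Pred) → (Fin (σ.parity P) → D) → Prop
  funcI : W → (f : σ.Func) → (Fin (σ.farity f) → D) → D
  eqI : W → D → D → Prop
  eqEquiv : ∀ w, Equivalence (eqI w)
  predCongr : ∀ w P (as bs : Fin (σ.parity P) → D),
      (∀ i, eqI w (as i) (bs i)) → (predI w P as ↔ predI w P bs)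
  funcCongr : ∀ w f (as bs : Fin (σ.farity f) → D),
      (∀ i, eqI w (as i) (bs i)) → eqI w (funcI w f as) (funcI w f bs)

/-- Denotation `[t]^g_w` of a term at a world under an assignment. -/
def Term.val (M : Model σ) (w : M.W) (g : ℕ → M.D) : Term σ → M.D
  | .var n => g n
  | .func f ts => M.funcI w f (fun i => (ts i).val M w g)

/-- The support relation `M, s ⊨_g φ`. -/
def Support (M : Model σ) : Set M.W → (ℕ → M.D) → Formula σ → Prop
  | s, g, .pred P ts => ∀ w ∈ s, M.predI w P (fun i => (ts i).val M w g)
  | s, g, .eq t t' => ∀ w ∈ s, M.eqI w (t.val M w g) (t'.val M w g)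
  | s, _, .falsum => s = ∅
  | s, g, .conj φ ψ => Support M s g φ ∧ Support M s g ψ
  | s, g, .idisj φ ψ => Support M s g φ ∨ Support M s g ψ
  | s, g, .impl φ ψ => ∀ t : Set M.W, t ⊆ s → Support M t g φ → Support M t g ψ
  | s, g, .all x φ => ∀ d : M.D, Support M s (Function.update g x d) φ
  | s, g, .iex x φ => ∃ d : M.D, Support M s (Function.update g x d) φ

/-- Id-models: `=` is interpreted as identity on the domain at each world. -/
def Model.IsId (M : Model σ) : Prop := ∀ w (d d' : M.D), M.eqI w d d' ↔ d = d'

/-- Entailment in InqBQ. -/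
def Entails (Φ : Set (Formula σ)) (ψ : Formula σ) : Prop :=
  ∀ (M : Model σ) (s : Set M.W) (g : ℕ → M.D),
    (∀ φ ∈ Φ, Support M s g φ) → Support M s g ψ

/-- Entailment restricted to id-models. -/
def EntailsId (Φ : Set (Formula σ)) (ψ : Formula σ) : Prop :=
  ∀ (M : Model σ), M.IsId → ∀ (s : Set M.W) (g : ℕ → M.D),
    (∀ φ ∈ Φ, Support M s g φ) → Support M s g ψ

/-- Validity in InqBQ. -/
def Valid (ψ : Formula σ) : Prop :=
  ∀ (M : Model σ) (s : Set M.W) (g : ℕ → M.D), Support M s g ψ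

/-- Validity over id-models. -/
def IdValid (ψ : Formula σ) : Prop :=
  ∀ (M : Model σ), M.IsId → ∀ (s : Set M.W) (g : ℕ → M.D), Support M s g ψ

/-- Equivalence of formulas. -/
def FmEquiv (φ ψ : Formula σ) : Prop :=
  ∀ (M : Model σ) (s : Set M.W) (g : ℕ → M.D), Support M s g φ ↔ Support M s g ψ

/-- A formula is truth-conditional if support at a state reduces to truth at each world. -/
def TruthConditional (φ : Formula σ) : Prop :=
  ∀ (M : Model σ) (s : Set M.W) (g : ℕ → M.D),
    Support M s g φ ↔ ∀ w ∈ s, Support M {w} g φ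

/-- A standard (Tarskian) relational structure for the signature. -/
structure Struc (σ : Sig) where
  D : Type
  dNonempty : Nonempty D
  predI : (P : σ.Pred) → (Fin (σ.parity P) → D) → Prop
  funcI : (f : σ.Func) → (Fin (σ.farity f) → D) → D

/-- Tarskian term denotation. -/
def Term.tval (A : Struc σ) (g : ℕ → A.D) : Term σ → A.D
  | .var n => g n
  | .func f ts => A.funcI f (fun i => (ts i).tval A g)

/-- Standard Tarskian satisfaction (reading `→` as material implication, `=` as identity). -/
def TSat (A : Struc σ) : (ℕ → A.D) → Formula σ → Prop
  | g, .pred P ts => A.predI P (fun i => (ts i).tval A g)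
  | g, .eq t t' => t.tval A g = t'.tval A g
  | _, .falsum => False
  | g, .conj φ ψ => TSat A g φ ∧ TSat A g ψ
  | g, .idisj φ ψ => TSat A g φ ∨ TSat A g ψ
  | g, .impl φ ψ => TSat A g φ → TSat A g ψ
  | g, .all x φ => ∀ d : A.D, TSat A (Function.update g x d) φ
  | g, .iex x φ => ∃ d : A.D, TSat A (Function.update g x d) φ

/-- Classical first-order (Tarskian) entailment. -/
def FOLEntails (Γ : Set (Formula σ)) (α : Formula σ) : Prop :=
  ∀ (A : Struc σ) (g : ℕ → A.D), (∀ γ ∈ Γ, TSat A g γ) → TSat A g α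

/-- The setoid on the domain given by `∼_w`. -/
def Model.setoidAt (M : Model σ) (w : M.W) : Setoid M.D := ⟨M.eqI w, M.eqEquiv w⟩

/-- The quotient relational structure `𝓜_w = (D/∼_w, I_w^∼)` induced at world `w`. -/
noncomputable def Model.quotStruc (M : Model σ) (w : M.W) : Struc σ where
  D := Quotient (M.setoidAt w)
  dNonempty := Nonempty.map (Quotient.mk (M.setoidAt w)) M.dNonempty
  predI P as := ∃ bs : Fin (σ.parity P) → M.D,
    (∀ i, Quotient.mk (M.setoidAt w) (bs i) = as i) ∧ M.predI w P bs
  funcI f as := Quotient.mk (M.setoidAt w) (M.funcI w f (fun i => (as i).out))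

/-- λt := ∃̷x (x = t). -/
def lam (x : ℕ) (t : Term σ) : Formula σ := .iex x (.eq (.var x) t)

/-- Conjunction of a finite list of formulas. -/
def conjList (l : List (Formula σ)) : Formula σ := l.foldr .conj Formula.verum

/-- x ≠ t. -/
def neTm (x : ℕ) (t : Term σ) : Formula σ := (Formula.eq (.var x) t).neg

/-- ∃̷x (x ≠ t). -/
def iexNe (t : Term σ) : Formula σ := .iex 0 (neTm 0 t)

/-- η := (=(a;b) ∧ =(b;a) ∧ ∃̷x(x≠b)) → ∃̷x(x≠a). -/
def etaOf (a b : Term σ) : Formula σ :=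
  .impl (.conj (.impl (lam 0 a) (lam 0 b))
          (.conj (.impl (lam 0 b) (lam 0 a)) (iexNe b)))
    (iexNe a)

/-- θ := ∃̷x ∃̷y ¬(x = a ∧ y = b). -/
def thetaOf (a b : Term σ) : Formula σ :=
  .iex 0 (.iex 1 (Formula.neg (.conj (.eq (.var 0) a) (.eq (.var 1) b))))

/-- ρ := ∀x∀y ?(x = y). -/
def rho : Formula σ := .all 0 (.all 1 (Formula.qm (.eq (.var 0) (.var 1))))

/-- The signature with exactly two constant symbols `a`, `b` (and no predicates). -/
def sigAB : Sig where
  Pred := Empty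
  parity := fun P => P.elim
  Func := Bool
  farity := fun _ => 0

/-- The constant `a`. -/
def tA : Term sigAB := .func false Fin.elim0

/-- The constant `b`. -/
def tB : Term sigAB := .func true Fin.elim0

def etaAB : Formula sigAB := etaOf tA tB

def thetaAB : Formula sigAB := thetaOf tA tB

/-- `a_w`. -/
def aVal (M : Model sigAB) (w : M.W) : M.D := M.funcI w false Fin.elim0

/-- `b_w`. -/
def bVal (M : Model sigAB) (w : M.W) : M.D := M.funcI w true Fin.elim0

/-- `R_s = {(a_w, b_w) | w ∈ s}`. -/
def RelOf (M : Model sigAB) (s : Set M.W) : Set (M.D × M.D) :=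
  {p | ∃ w ∈ s, p = (aVal M w, bVal M w)}

/-- An id-model (for the signature with the two constants a, b) is full if `R_W = D × D`. -/
def Model.IsFull (M : Model sigAB) : Prop := RelOf M Set.univ = Set.univ

/-- Classical existential quantifier ∃xφ := ¬∀x¬φ. -/
def cExists (x : ℕ) (φ : Formula σ) : Formula σ := (Formula.all x φ.neg).neg

/-- ⋀_{i<j<n} (xᵢ ≠ xⱼ). -/
def distinctFm (n : ℕ) : Formula sigAB :=
  conjList ((List.range n).flatMap fun i => (List.range n).filterMap fun j =>
    if i < j then some ((Formula.eq (.var i) (.var j)).neg) else none)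

/-- χₙ := ∃x₁…∃xₙ ⋀_{i<j} (xᵢ ≠ xⱼ), expressing that there are at least n elements. -/
def chi (n : ℕ) : Formula sigAB := (List.range n).foldr cExists (distinctFm n)

/-- The canonical full id-model over a nonempty domain `D`: worlds are pairs `(d, e)`,
with `a_{(d,e)} = d` and `b_{(d,e)} = e`. -/
def canonModel (D : Type) (hD : Nonempty D) : Model sigAB where
  W := D × D
  D := D
  wNonempty := Nonempty.map (fun d => (d, d)) hD
  dNonempty := hD
  predI := fun _ P => P.elim
  funcI := fun w f _ => cond f w.2 w.1
  eqI := fun _ => Eq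
  eqEquiv := fun _ => eq_equivalence
  predCongr := fun _ P => P.elim
  funcCongr := fun _ _ _ _ _ => rfl

/-- Extending a signature with two fresh constant symbols `a`, `b`. -/
def sigExt (σ : Sig) : Sig where
  Pred := σ.Pred
  parity := σ.parity
  Func := σ.Func ⊕ Bool
  farity := Sum.elim σ.farity (fun _ => 0)

/-- Lift of a term to the extended signature. -/
def Term.lift : Term σ → Term (sigExt σ)
  | .var n => .var n
  | .func f ts => .func (Sum.inl f) (fun i => (ts i).lift)

/-- Lift of a formula to the extended signature. -/
def Formula.lift : Formula σ → Formula (sigExt σ)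
  | .pred P ts => .pred P (fun i => (ts i).lift)
  | .eq t t' => .eq t.lift t'.lift
  | .falsum => .falsum
  | .conj φ ψ => .conj φ.lift ψ.lift
  | .idisj φ ψ => .idisj φ.lift ψ.lift
  | .impl φ ψ => .impl φ.lift ψ.lift
  | .all x φ => .all x φ.lift
  | .iex x φ => .iex x φ.lift

/-- The fresh constant `a` of the extended signature. -/
def extA : Term (sigExt σ) := .func (Sum.inr false) Fin.elim0

/-- The fresh constant `b` of the extended signature. -/
def extB : Term (sigExt σ) := .func (Sum.inr true) Fin.elim0

/-- The canonical full id-model based on a relational structure `𝓜`: worlds are pairs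
`(d, e)`; `a_{(d,e)} = d`, `b_{(d,e)} = e`, and all symbols of `σ` are interpreted
rigidly as in `𝓜`. -/
def canonModelOf (A : Struc σ) : Model (sigExt σ) where
  W := A.D × A.D
  D := A.D
  wNonempty := Nonempty.map (fun d => (d, d)) A.dNonempty
  dNonempty := A.dNonempty
  predI := fun _ P => A.predI P
  funcI := fun w f => match f with
    | .inl f₀ => fun as => A.funcI f₀ as
    | .inr b => fun _ => cond b w.2 w.1
  eqI := fun _ => Eq
  eqEquiv := fun _ => eq_equivalence
  predCongr := fun _ P as bs h => by
    have hab : as = bs := funext fun i => h i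
    rw [hab]
  funcCongr := fun w f as bs h => by
    have hab : as = bs := funext fun i => h i
    rw [hab]
/-
In an id-model, `θ` fails at a state exactly when the state is full, i.e. realises every pair
`(d, e)` as `(a_w, b_w)`, and `η` says that on every substate where `a` and `b` determine each
other and `b` misses a value, `a` misses a value too. Over a finite domain `η` is valid, since a
bijection between the `a`-values and the `b`-values of a substate that covers `D` by its
`a`-values would cover `D` by its `b`-values; so `η → θ` fails at the full state of the
canonical model. Over an infinite domain, an injective non-surjective `f : D → D` refutes `η` on
the part `{w | b_w = f a_w}` of any full state, so `η → θ` holds. Hence `η → θ` follows over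
id-models from the formulas saying that there are at least `n` individuals, but not from finitely
many of them.
-/

open Function

theorem exists_injective_not_surjective (α : Type*) [Infinite α] :
    ∃ f : α → α, Injective f ∧ ¬ Surjective f := by
  obtain ⟨e⟩ : Nonempty (Option α ≃ α) := Cardinal.eq.mp <| by
    rw [Cardinal.mk_option, Cardinal.add_one_eq (Cardinal.infinite_iff.mp ‹_›)]
  refine ⟨e ∘ some, e.injective.comp (Option.some_injective α), fun h => ?_⟩
  obtain ⟨x, hx⟩ := h (e none)
  exact Option.some_ne_none x (e.injective hx)

theorem infinite_of_forall_exists_injective {α : Type*}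
    (h : ∀ n, ∃ e : Fin n → α, Injective e) : Infinite α := by
  refine not_finite_iff_infinite.mp fun _ => ?_
  obtain ⟨e, he⟩ := h (Nat.card α + 1)
  simpa using Nat.card_le_card_of_injective e he

theorem Term.val_update_of_not_varOccurs {t : Term σ} {x : ℕ} (hx : ¬ t.VarOccurs x)
    (M : Model σ) (w : M.W) (g : ℕ → M.D) (d : M.D) :
    t.val M w (update g x d) = t.val M w g := by
  induction t with
  | var n => exact update_of_ne hx d g
  | func f ts ih => exact congrArg (M.funcI w f) (funext fun i => ih i fun h => hx ⟨i, h⟩)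

section Support

variable {M : Model σ} {s : Set M.W} {g : ℕ → M.D}

theorem support_empty (M : Model σ) (g : ℕ → M.D) (φ : Formula σ) : Support M ∅ g φ := by
  induction φ generalizing g with
  | pred | eq => exact fun _ hw => absurd hw (Set.notMem_empty _)
  | falsum => rfl
  | conj _ _ ih₁ ih₂ => exact ⟨ih₁ g, ih₂ g⟩
  | idisj _ _ ih₁ _ => exact .inl (ih₁ g)
  | impl _ _ _ ih₂ =>
    intro t ht _
    rw [Set.subset_empty_iff.mp ht]
    exact ih₂ g
  | all _ _ ih => exact fun _ => ih _
  | iex _ _ ih => exact M.dNonempty.elim fun d => ⟨d, ih _⟩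

theorem support_verum : Support M s g Formula.verum := fun _ _ h => h

theorem support_conjList {l : List (Formula σ)} :
    Support M s g (conjList l) ↔ ∀ φ ∈ l, Support M s g φ := by
  induction l with
  | nil => exact iff_of_true support_verum fun _ h => absurd h List.not_mem_nil
  | cons φ l ih => exact (and_congr_right' ih).trans List.forall_mem_cons.symm

theorem support_neg_iff_of_flat {φ : Formula σ} {P : M.W → Prop}
    (hφ : ∀ t, Support M t g φ ↔ ∀ w ∈ t, P w) :
    Support M s g φ.neg ↔ ∀ w ∈ s, ¬ P w := by
  refine ⟨fun h w hw hP => ?_, fun h t ht hφt => ?_⟩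
  · refine Set.singleton_ne_empty w (h {w} (Set.singleton_subset_iff.mpr hw) ((hφ _).mpr ?_))
    simpa using hP
  · exact Set.eq_empty_of_forall_notMem fun w hw => h w (ht hw) ((hφ t).mp hφt w hw)

variable (hId : M.IsId)
include hId

theorem support_eq_iff {t t' : Term σ} :
    Support M s g (.eq t t') ↔ ∀ w ∈ s, t.val M w g = t'.val M w g :=
  forall₂_congr fun w _ => hId w _ _

theorem support_neg_eq_iff {t t' : Term σ} :
    Support M s g (Formula.eq t t').neg ↔ ∀ w ∈ s, t.val M w g ≠ t'.val M w g :=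
  support_neg_iff_of_flat fun _ => support_eq_iff hId

theorem support_lam_iff {x : ℕ} {t : Term σ} (ht : ¬ t.VarOccurs x) :
    Support M s g (lam x t) ↔ ∃ d, ∀ w ∈ s, t.val M w g = d := by
  refine exists_congr fun d => (support_eq_iff hId).trans ?_
  simp only [Term.val, update_self, Term.val_update_of_not_varOccurs ht, eq_comm]

theorem support_iexNe_iff {t : Term σ} (ht : ¬ t.VarOccurs 0) :
    Support M s g (iexNe t) ↔ ∃ d, ∀ w ∈ s, t.val M w g ≠ d := by
  refine exists_congr fun d => (support_neg_eq_iff hId).trans ?_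
  simp only [Term.val, update_self, Term.val_update_of_not_varOccurs ht, ne_comm]

theorem support_impl_lam_iff {x : ℕ} {t t' : Term σ} (ht : ¬ t.VarOccurs x)
    (ht' : ¬ t'.VarOccurs x) :
    Support M s g (.impl (lam x t) (lam x t')) ↔
      ∀ w ∈ s, ∀ w' ∈ s, t.val M w g = t.val M w' g → t'.val M w g = t'.val M w' g := by
  simp only [Support, support_lam_iff hId ht, support_lam_iff hId ht']
  refine ⟨fun h w hw w' hw' heq => ?_, fun h u hu ⟨d, hd⟩ => ?_⟩
  · obtain ⟨e, he⟩ := h {w, w'} (Set.insert_subset hw (Set.singleton_subset_iff.mpr hw'))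
      ⟨_, fun v hv => hv.elim (· ▸ heq) (· ▸ rfl)⟩
    rw [he w (.inl rfl), he w' (.inr rfl)]
  · rcases u.eq_empty_or_nonempty with rfl | ⟨w₀, hw₀⟩
    · exact M.dNonempty.elim fun e => ⟨e, fun _ hw => absurd hw (Set.notMem_empty _)⟩
    · exact ⟨t'.val M w₀ g, fun w hw =>
        h w (hu hw) w₀ (hu hw₀) ((hd w hw).trans (hd w₀ hw₀).symm)⟩

theorem support_etaOf_iff {a b : Term σ} (ha : ¬ a.VarOccurs 0) (hb : ¬ b.VarOccurs 0) :
    Support M s g (etaOf a b) ↔ ∀ u ⊆ s,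
      (∀ w ∈ u, ∀ w' ∈ u, a.val M w g = a.val M w' g → b.val M w g = b.val M w' g) →
      (∀ w ∈ u, ∀ w' ∈ u, b.val M w g = b.val M w' g → a.val M w g = a.val M w' g) →
      (∃ d, ∀ w ∈ u, b.val M w g ≠ d) → ∃ d, ∀ w ∈ u, a.val M w g ≠ d := by
  rw [etaOf, Support]
  simp only [Support.eq_4, support_impl_lam_iff hId ha hb, support_impl_lam_iff hId hb ha,
    support_iexNe_iff hId ha, support_iexNe_iff hId hb, and_imp]

end Support

def distinctFrom (x k : ℕ) : Formula σ := conjList ((List.range k).map fun i => neTm x (.var i))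

/-- `existsFresh k j` says that there are `j` individuals, pairwise distinct and distinct from
`x₀, …, x_{k-1}`, using the variables `x_k, …, x_{k+j-1}`. -/
def existsFresh : ℕ → ℕ → Formula σ
  | _, 0 => Formula.verum
  | k, j + 1 => .iex k (.conj (distinctFrom k k) (existsFresh (k + 1) j))

section Fresh

variable {M : Model σ} (hId : M.IsId) {s : Set M.W} (hs : s.Nonempty)
include hId hs

theorem support_distinctFrom_iff {x k : ℕ} {g : ℕ → M.D} :
    Support M s g (distinctFrom x k) ↔ ∀ i < k, g x ≠ g i := by
  simp only [distinctFrom, support_conjList, List.forall_mem_map, List.mem_range, neTm,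
    support_neg_eq_iff hId, Term.val]
  exact forall₂_congr fun _ _ => ⟨fun h => h _ hs.some_mem, fun h _ _ => h⟩

theorem support_existsFresh_iff {j k : ℕ} {g : ℕ → M.D} :
    Support M s g (existsFresh k j) ↔
      ∃ e : Fin j → M.D, Injective e ∧ ∀ m, ∀ i < k, e m ≠ g i := by
  induction j generalizing k g with
  | zero => exact iff_of_true support_verum ⟨Fin.elim0, fun i => i.elim0, fun m => m.elim0⟩
  | succ j ih =>
    have hupd : ∀ d, ∀ i < k, update g k d i = g i := fun d i hi => update_of_ne hi.ne d g
    simp only [existsFresh, Support.eq_8, Support.eq_4, support_distinctFrom_iff hId hs, ih,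
      update_self]
    constructor
    · rintro ⟨d, hd, e, he, hek⟩
      refine ⟨Fin.cons d e, Fin.cons_injective_iff.mpr ⟨?_, he⟩, Fin.cases ?_ ?_⟩
      · rintro ⟨m, rfl⟩
        exact hek m k k.lt_succ_self (update_self k _ g).symm
      · intro i hi
        rw [Fin.cons_zero, ← hupd d i hi]
        exact hd i hi
      · intro m i hi
        rw [Fin.cons_succ, ← hupd d i hi]
        exact hek m i (Nat.lt_succ_of_lt hi)
    · rintro ⟨e, he, hek⟩
      refine ⟨e 0, fun i hi => hupd _ i hi ▸ hek 0 i hi, Fin.tail e,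
        he.comp (Fin.succ_injective _), fun m i hi => ?_⟩
      rcases Nat.lt_succ_iff_lt_or_eq.mp hi with hi | rfl
      · exact hupd _ i hi ▸ hek m.succ i hi
      · exact (update_self i _ g).symm ▸ he.ne (Fin.succ_ne_zero m)

end Fresh

section TwoConstants

variable {M : Model sigAB}

theorem val_tA (w : M.W) (g : ℕ → M.D) : tA.val M w g = aVal M w :=
  congrArg (M.funcI w false) (funext fun i => i.elim0)

theorem val_tB (w : M.W) (g : ℕ → M.D) : tB.val M w g = bVal M w :=
  congrArg (M.funcI w true) (funext fun i => i.elim0)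

theorem not_varOccurs_tA (x : ℕ) : ¬ tA.VarOccurs x := fun ⟨i, _⟩ => i.elim0

theorem not_varOccurs_tB (x : ℕ) : ¬ tB.VarOccurs x := fun ⟨i, _⟩ => i.elim0

variable (hId : M.IsId)
include hId

theorem support_thetaAB_iff {s : Set M.W} {g : ℕ → M.D} :
    Support M s g thetaAB ↔ RelOf M s ≠ Set.univ := by
  have hflat : ∀ d e t, Support M t (update (update g 0 d) 1 e)
      (.conj (.eq (.var 0) tA) (.eq (.var 1) tB)) ↔
        ∀ w ∈ t, (d, e) = (aVal M w, bVal M w) := by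
    intro d e t
    simp only [Support.eq_4, support_eq_iff hId, Term.val, val_tA, val_tB, update_self,
      update_of_ne zero_ne_one, Prod.mk.injEq, ← forall₂_and]
  simp only [thetaAB, thetaOf, Support.eq_8, support_neg_iff_of_flat (hflat _ _),
    Set.ne_univ_iff_exists_notMem, RelOf, Set.mem_ofPred_eq, Prod.exists, not_exists, not_and]

theorem support_etaAB_of_finite [Finite M.D] (s : Set M.W) (g : ℕ → M.D) :
    Support M s g etaAB := by
  refine (support_etaOf_iff hId (not_varOccurs_tA 0) (not_varOccurs_tB 0)).mpr
    fun u _ _ hba ⟨e, he⟩ => ?_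
  simp only [val_tA, val_tB] at hba he ⊢
  by_contra! hcover
  choose wit hwit_mem hwit using hcover
  have hinj : Injective fun d => bVal M (wit d) := fun d d' h =>
    (hwit d).symm.trans ((hba _ (hwit_mem d) _ (hwit_mem d') h).trans (hwit d'))
  obtain ⟨d, hd⟩ := Finite.injective_iff_surjective.mp hinj e
  exact he (wit d) (hwit_mem d) hd

theorem support_etaAB_impl_thetaAB_of_infinite [Infinite M.D] (s : Set M.W) (g : ℕ → M.D) :
    Support M s g (etaAB.impl thetaAB) := by
  obtain ⟨f, hf, hf_not_surj⟩ := exists_injective_not_surjective M.D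
  intro t _ hη
  by_contra hθ
  have hfull : RelOf M t = Set.univ := not_not.mp ((support_thetaAB_iff hId).not.mp hθ)
  obtain ⟨d, hd⟩ := (support_etaOf_iff hId (not_varOccurs_tA 0) (not_varOccurs_tB 0)).mp hη
    {w ∈ t | bVal M w = f (aVal M w)} (Set.sep_subset _ _)
    (fun w hw w' hw' h => by simp only [val_tB, hw.2, hw'.2, val_tA] at h ⊢; rw [h])
    (fun w hw w' hw' h => by simp only [val_tB, hw.2, hw'.2, val_tA] at h ⊢; exact hf h)
    (by
      obtain ⟨e, he⟩ := not_forall.mp hf_not_surj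
      exact ⟨e, fun w hw heq => he ⟨aVal M w, by rw [← hw.2, ← val_tB w g, heq]⟩⟩)
  obtain ⟨w, hw, hdw⟩ : (d, f d) ∈ RelOf M t := hfull ▸ Set.mem_univ _
  obtain ⟨rfl, hfd⟩ := Prod.mk.inj hdw
  exact hd w ⟨hw, hfd.symm⟩ (val_tA w g)

end TwoConstants

theorem canonModel_isId (D : Type) (hD : Nonempty D) : (canonModel D hD).IsId :=
  fun _ _ _ => Iff.rfl

theorem canonModel_isFull (D : Type) (hD : Nonempty D) : (canonModel D hD).IsFull :=
  Set.eq_univ_of_forall fun p => ⟨p, trivial, rfl⟩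

theorem not_support_etaAB_impl_thetaAB_canonModel (D : Type) [Finite D] (hD : Nonempty D)
    (g : ℕ → D) : ¬ Support (canonModel D hD) Set.univ g (etaAB.impl thetaAB) := by
  intro h
  have hId := canonModel_isId D hD
  have : Finite (canonModel D hD).D := ‹Finite D›
  exact (support_thetaAB_iff hId).mp (h _ subset_rfl (support_etaAB_of_finite hId _ g))
    (canonModel_isFull D hD)

/-- InqBQ is not entailment-compact relative to id-models. -/
theorem inqbq_not_id_compact :
    ∃ (Φ : Set (Formula sigAB)) (ψ : Formula sigAB),
      EntailsId Φ ψ ∧ ∀ Φ₀ ⊆ Φ, Φ₀.Finite → ¬ EntailsId Φ₀ ψ := by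
  refine ⟨Set.range (existsFresh 0), etaAB.impl thetaAB, ?_, ?_⟩
  · intro M hId s g hΦ
    rcases s.eq_empty_or_nonempty with rfl | hs
    · exact support_empty M g _
    have : Infinite M.D := infinite_of_forall_exists_injective fun n =>
      have ⟨e, he, _⟩ := (support_existsFresh_iff hId hs).mp (hΦ _ ⟨n, rfl⟩)
      ⟨e, he⟩
    exact support_etaAB_impl_thetaAB_of_infinite hId s g
  · intro Φ₀ hΦ₀ hfin hent
    obtain ⟨I, -, hI, rfl⟩ :=
      hfin.exists_subset_finite_image_eq (Set.image_univ.symm ▸ hΦ₀)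
    obtain ⟨N, hN⟩ := hI.bddAbove
    have hId := canonModel_isId (Fin (N + 1)) ⟨0⟩
    refine not_support_etaAB_impl_thetaAB_canonModel _ ⟨0⟩ (fun _ => 0)
      (hent _ hId _ _ ?_)
    rintro _ ⟨n, hn, rfl⟩
    exact (support_existsFresh_iff hId (s := Set.univ) ⟨(0, 0), trivial⟩).mpr
      ⟨Fin.castLE (Nat.le_succ_of_le (hN hn)), Fin.castLE_injective _,
        fun _ i h => absurd h i.not_lt_zero⟩

end InqBQ
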